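/- Let E be an AL-space and (T_t)_{t∈J} a Markov semigroup on E, with J = ℕ or J = (0,∞). Then the following are equivalent: (i) there is a normalised fixed point f₀ ∈ E₊ of the semigroup such that T_t converges strongly to the rank-1 projection 𝟙 ⊗ f₀ (where 𝟙 is the norm functional); (ii) there exists a non-zero lower bound for the semigroup. -/

import Mathlib

open Filter Topology

/-!
In an AL-space the norm is additive on the positive cone, so `‖x⁺‖ - ‖x⁻‖` is a continuous
linear functional `𝟙`, preserved by every Markov operator. If `h ≠ 0` is a lower bound and
`𝟙 v = 0`, then `v⁺` and `v⁻` have equal norms and, once normalised, are both eventually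
almost above `h` under `Sⁿ`; their images therefore overlap in mass `‖h‖`, and some power
contracts `v` by the factor `1 - ‖h‖ / 2`. Since `‖Sⁿ v‖` is non-increasing, it tends to `0`.

Lower bounds are closed under `⊔`, under `S` and under limits, and their norms are at most
`1`; since norm-bounded increasing sequences converge in an AL-space, there is a lower bound
`h*` of maximal norm. Maximality forces `h* ⊔ S h* = h*`, hence `S h* ≤ h*`, and as `S`
preserves the norm, `S h* = h*`. Normalising `h*` gives `f₀`, and `Sⁿ f - 𝟙 f • f₀ → 0`
since `𝟙` kills `f - 𝟙 f • f₀`. The continuous-time case reduces to `S = T 1`.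
-/

theorem le_add_negPart_sub {α : Type*} [Lattice α] [AddCommGroup α] [IsOrderedAddMonoid α]
    (x h : α) : h ≤ x + (x - h)⁻ := by
  rw [← posPart_neg, neg_sub, ← sub_le_iff_le_add']
  exact le_posPart _

theorem dyadic_smul_nonneg {V : Type*} [AddCommGroup V] [Lattice V] [IsOrderedAddMonoid V]
    [Module ℝ V] {x : V} (hx : 0 ≤ x) (m k : ℕ) : 0 ≤ ((m : ℝ) / 2 ^ k) • x := by
  induction k with
  | zero => simpa [Nat.cast_smul_eq_nsmul] using nsmul_nonneg hx m
  | succ k ih =>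
    refine nsmul_two_semiclosed ?_
    have halve : (2 : ℕ) • (((m : ℝ) / 2 ^ (k + 1)) • x) = ((m : ℝ) / 2 ^ k) • x := by
      rw [← Nat.cast_smul_eq_nsmul ℝ, smul_smul]
      congr 1
      field_simp
      ring
    rwa [halve]

theorem semigroup_one_pow {M : Type*} [Monoid M] {T : ℝ → M}
    (hT : ∀ s t, 0 < s → 0 < t → T (s + t) = T s * T t) : ∀ n : ℕ, 1 ≤ n → T 1 ^ n = T n := by
  refine Nat.le_induction (by simp) fun n hn ih => ?_
  rw [pow_succ, ih, Nat.cast_succ, hT _ _ (by exact_mod_cast hn) one_pos]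

section ALSpace

variable {E : Type*} [NormedAddCommGroup E] [Lattice E]

variable (E) in
def IsALNorm : Prop := ∀ f g : E, 0 ≤ f → 0 ≤ g → ‖f + g‖ = ‖f‖ + ‖g‖

section Markov

variable [NormedSpace ℝ E]

structure IsMarkov (S : E →L[ℝ] E) : Prop where
  nonneg : ∀ f, 0 ≤ f → 0 ≤ S f
  norm_eq : ∀ f, 0 ≤ f → ‖S f‖ = ‖f‖

theorem IsMarkov.mul {S T : E →L[ℝ] E} (hS : IsMarkov S) (hT : IsMarkov T) :
    IsMarkov (S * T) :=
  ⟨fun f hf => hS.nonneg _ (hT.nonneg f hf),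
    fun f hf => (hS.norm_eq _ (hT.nonneg f hf)).trans (hT.norm_eq f hf)⟩

theorem IsMarkov.pow {S : E →L[ℝ] E} (hS : IsMarkov S) (n : ℕ) : IsMarkov (S ^ n) := by
  induction n with
  | zero => exact ⟨fun f hf => hf, fun f _ => rfl⟩
  | succ n ih => rw [pow_succ]; exact ih.mul hS

end Markov

variable [IsOrderedAddMonoid E]

namespace IsALNorm

variable (hAL : IsALNorm E)
include hAL

theorem norm_sub_of_le {a b : E} (ha : 0 ≤ a) (hab : a ≤ b) : ‖b - a‖ = ‖b‖ - ‖a‖ := by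
  rw [eq_sub_iff_add_eq', ← hAL _ _ ha (sub_nonneg.2 hab), add_sub_cancel]

theorem eq_of_le_of_norm_le {a b : E} (ha : 0 ≤ a) (hab : a ≤ b) (hba : ‖b‖ ≤ ‖a‖) : a = b := by
  have hnorm : ‖b - a‖ ≤ 0 := by rw [hAL.norm_sub_of_le ha hab]; linarith
  exact (sub_eq_zero.1 (norm_le_zero_iff.1 hnorm)).symm

-- Both sides of `(x + y)⁺ + x⁻ + y⁻ = (x + y)⁻ + x⁺ + y⁺` are sums of positive elements.
theorem norm_posPart_sub_norm_negPart_add (x y : E) :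
    ‖(x + y)⁺‖ - ‖(x + y)⁻‖ = (‖x⁺‖ - ‖x⁻‖) + (‖y⁺‖ - ‖y⁻‖) := by
  have hsplit : (x + y)⁺ + (x⁻ + y⁻) = (x + y)⁻ + (x⁺ + y⁺) := by
    have hpos (a : E) : a⁺ = a + a⁻ := eq_add_of_sub_eq (posPart_sub_negPart a)
    rw [hpos (x + y), hpos x, hpos y]
    abel
  have hnorm := congrArg norm hsplit
  rw [hAL _ _ (posPart_nonneg _) (add_nonneg (negPart_nonneg _) (negPart_nonneg _)),
    hAL _ _ (negPart_nonneg _) (negPart_nonneg _),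
    hAL _ _ (negPart_nonneg _) (add_nonneg (posPart_nonneg _) (posPart_nonneg _)),
    hAL _ _ (posPart_nonneg _) (posPart_nonneg _)] at hnorm
  linarith

end IsALNorm

theorem IsMarkov.negPart_apply_le [NormedSpace ℝ E] {S : E →L[ℝ] E} (hS : IsMarkov S) (x : E) :
    (S x)⁻ ≤ S x⁻ := by
  refine sup_le ?_ (hS.nonneg _ (negPart_nonneg x))
  rw [neg_le_iff_add_nonneg, ← map_add, add_comm, ← eq_add_of_sub_eq (posPart_sub_negPart x)]
  exact hS.nonneg _ (posPart_nonneg x)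

variable [HasSolidNorm E]

theorem norm_le_norm_of_nonneg_of_le {a b : E} (ha : 0 ≤ a) (hab : a ≤ b) : ‖a‖ ≤ ‖b‖ :=
  norm_le_norm_of_abs_le_abs (by rwa [abs_of_nonneg ha, abs_of_nonneg (ha.trans hab)])

theorem tendsto_norm_negPart_sub_of_tendsto {ι : Type*} {l : Filter ι} {u : ι → E} {x : E}
    (hu : Tendsto u l (𝓝 x)) : Tendsto (fun i => ‖(u i - x)⁻‖) l (𝓝 0) := by
  have hcont := ((continuous_norm.comp continuous_negPart).tendsto (x - x)).comp (hu.sub_const x)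
  simpa only [Function.comp_def, sub_self, negPart_zero, norm_zero] using hcont

theorem continuous_norm_posPart_sub_norm_negPart : Continuous fun x : E => ‖x⁺‖ - ‖x⁻‖ :=
  (continuous_norm.comp continuous_posPart).sub (continuous_norm.comp continuous_negPart)

namespace IsALNorm

variable (hAL : IsALNorm E)
include hAL

theorem norm_eq_norm_posPart_add_norm_negPart (x : E) : ‖x‖ = ‖x⁺‖ + ‖x⁻‖ := by
  rw [← norm_abs_eq_norm x, ← posPart_add_negPart x, hAL _ _ (posPart_nonneg x) (negPart_nonneg x)]

theorem dist_eq_dist_norm_of_le {a b : E} (ha : 0 ≤ a) (hab : a ≤ b) :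
    dist a b = dist ‖a‖ ‖b‖ := by
  rw [dist_comm, dist_eq_norm, hAL.norm_sub_of_le ha hab, Real.dist_eq, abs_sub_comm,
    abs_of_nonneg (sub_nonneg.2 (norm_le_norm_of_nonneg_of_le ha hab))]

theorem exists_forall_norm_le [CompleteSpace E] {D : Set E} (hne : D.Nonempty)
    (hD : ∀ x ∈ D, 0 ≤ x) (hsup : SupClosed D) (hseq : IsSeqClosed D)
    (hbdd : BddAbove (norm '' D)) : ∃ x ∈ D, ∀ y ∈ D, ‖y‖ ≤ ‖x‖ := by
  set M := sSup (norm '' D)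
  obtain ⟨u, -, hu, huD⟩ := exists_seq_tendsto_sSup (hne.image norm) hbdd
  choose x hxD hxu using huD
  set g := partialSups x
  have hgD (n : ℕ) : g n ∈ D := by
    rw [partialSups_apply]
    exact hsup.finsetSup'_mem _ fun i _ => hxD i
  have hgM (n : ℕ) : ‖g n‖ ≤ M := le_csSup hbdd ⟨_, hgD n, rfl⟩
  have hxg (n : ℕ) : u n ≤ ‖g n‖ :=
    hxu n ▸ norm_le_norm_of_nonneg_of_le (hD _ (hxD n)) (le_partialSups x n)
  have hgnorm : Tendsto (fun n => ‖g n‖) atTop (𝓝 M) :=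
    tendsto_of_tendsto_of_tendsto_of_le_of_le hu tendsto_const_nhds hxg hgM
  -- `g` is increasing, so in an AL-space its distances are those of its norms.
  have hdist (m n : ℕ) : dist (g m) (g n) = dist ‖g m‖ ‖g n‖ := by
    rcases le_total m n with hmn | hnm
    · exact hAL.dist_eq_dist_norm_of_le (hD _ (hgD m)) (g.monotone hmn)
    · rw [dist_comm, hAL.dist_eq_dist_norm_of_le (hD _ (hgD n)) (g.monotone hnm), dist_comm]
  have hcauchy : CauchySeq g := Metric.cauchySeq_iff.2 fun ε hε =>
    (Metric.cauchySeq_iff.1 hgnorm.cauchySeq ε hε).imp fun _ hN m hm n hn =>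
      hdist m n ▸ hN m hm n hn
  obtain ⟨x₀, hx₀⟩ := cauchySeq_tendsto_of_complete hcauchy
  refine ⟨x₀, hseq hgD hx₀, fun y hy => ?_⟩
  rw [tendsto_nhds_unique hx₀.norm hgnorm]
  exact le_csSup hbdd ⟨y, hy, rfl⟩

variable [NormedSpace ℝ E]

noncomputable def normFunctional : E →L[ℝ] ℝ :=
  (AddMonoidHom.mk' (fun x : E => ‖x⁺‖ - ‖x⁻‖)
    hAL.norm_posPart_sub_norm_negPart_add).toRealLinearMap
    continuous_norm_posPart_sub_norm_negPart

theorem normFunctional_apply (x : E) : hAL.normFunctional x = ‖x⁺‖ - ‖x⁻‖ := rfl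

theorem normFunctional_apply_of_nonneg {x : E} (hx : 0 ≤ x) : hAL.normFunctional x = ‖x‖ := by
  rw [normFunctional_apply, posPart_eq_self.2 hx, negPart_eq_zero.2 hx, norm_zero, sub_zero]

theorem norm_eq_normFunctional_add (x : E) : ‖x‖ = hAL.normFunctional x + 2 * ‖x⁻‖ := by
  rw [normFunctional_apply, hAL.norm_eq_norm_posPart_add_norm_negPart x]
  ring

theorem norm_sub_eq_of_nonneg {w h : E} (hw : 0 ≤ w) (hh : 0 ≤ h) :
    ‖w - h‖ = ‖w‖ - ‖h‖ + 2 * ‖(w - h)⁻‖ := by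
  rw [hAL.norm_eq_normFunctional_add, map_sub, hAL.normFunctional_apply_of_nonneg hw,
    hAL.normFunctional_apply_of_nonneg hh]

end IsALNorm

variable [NormedSpace ℝ E]

theorem real_smul_nonneg {c : ℝ} (hc : 0 ≤ c) {x : E} (hx : 0 ≤ x) : 0 ≤ c • x := by
  have hdyadic : Tendsto (fun k : ℕ => (⌊c * 2 ^ k⌋₊ : ℝ) / 2 ^ k) atTop (𝓝 c) :=
    (tendsto_nat_floor_mul_div_atTop hc).comp (tendsto_pow_atTop_atTop_of_one_lt one_lt_two)
  exact isClosed_nonneg.mem_of_tendsto (hdyadic.smul_const x)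
    (Eventually.of_forall fun k => dyadic_smul_nonneg hx _ k)

theorem inv_norm_smul_nonneg {x : E} (hx : 0 ≤ x) : 0 ≤ ‖x‖⁻¹ • x :=
  real_smul_nonneg (inv_nonneg.2 (norm_nonneg x)) hx

namespace IsMarkov

variable {S : E →L[ℝ] E}

theorem norm_apply_le (hAL : IsALNorm E) (hS : IsMarkov S) (x : E) : ‖S x‖ ≤ ‖x‖ :=
  calc ‖S x‖ = ‖S x⁺ - S x⁻‖ := by rw [← map_sub, posPart_sub_negPart]
    _ ≤ ‖S x⁺‖ + ‖S x⁻‖ := norm_sub_le _ _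
    _ = ‖x‖ := by
      rw [hS.norm_eq _ (posPart_nonneg x), hS.norm_eq _ (negPart_nonneg x),
        ← hAL.norm_eq_norm_posPart_add_norm_negPart]

theorem normFunctional_apply (hAL : IsALNorm E) (hS : IsMarkov S) (x : E) :
    hAL.normFunctional (S x) = hAL.normFunctional x := by
  rw [← posPart_sub_negPart x, map_sub, map_sub,
    hAL.normFunctional_apply_of_nonneg (hS.nonneg _ (posPart_nonneg x)),
    hAL.normFunctional_apply_of_nonneg (hS.nonneg _ (negPart_nonneg x)),
    hS.norm_eq _ (posPart_nonneg x), hS.norm_eq _ (negPart_nonneg x), posPart_sub_negPart,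
    hAL.normFunctional_apply]

theorem norm_negPart_apply_le (hS : IsMarkov S) (x : E) : ‖(S x)⁻‖ ≤ ‖x⁻‖ :=
  (norm_le_norm_of_nonneg_of_le (negPart_nonneg _) (hS.negPart_apply_le x)).trans_eq
    (hS.norm_eq _ (negPart_nonneg x))

end IsMarkov

structure IsLowerBound (S : E →L[ℝ] E) (h : E) : Prop where
  nonneg : 0 ≤ h
  tendsto : ∀ f, 0 ≤ f → ‖f‖ = 1 → Tendsto (fun n : ℕ => ‖((S ^ n) f - h)⁻‖) atTop (𝓝 0)

namespace IsLowerBound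

variable {S : E →L[ℝ] E} {h : E}

theorem sup {h' : E} (hh : IsLowerBound S h) (hh' : IsLowerBound S h') :
    IsLowerBound S (h ⊔ h') := by
  refine ⟨hh.nonneg.trans le_sup_left, fun f hf hf1 => ?_⟩
  refine squeeze_zero (fun n => norm_nonneg _) (fun n => ?_)
    (by simpa only [add_zero] using (hh.tendsto f hf hf1).add (hh'.tendsto f hf hf1))
  have hsplit : ((S ^ n) f - h ⊔ h')⁻ = ((S ^ n) f - h)⁻ ⊔ ((S ^ n) f - h')⁻ := by
    simp only [negPart_def, neg_sub]
    rw [sup_sub, sup_sup_distrib_right]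
  exact hsplit ▸ norm_sup_le_add _ _

theorem map (hS : IsMarkov S) (hh : IsLowerBound S h) : IsLowerBound S (S h) := by
  refine ⟨hS.nonneg _ hh.nonneg, fun f hf hf1 => ?_⟩
  refine (tendsto_add_atTop_iff_nat 1).1 <| squeeze_zero (fun n => norm_nonneg _) (fun n => ?_)
    (hh.tendsto f hf hf1)
  rw [pow_succ', mul_apply_eq_comp, ← map_sub]
  exact hS.norm_negPart_apply_le _

theorem norm_le_one (hAL : IsALNorm E) (hS : IsMarkov S) (hh : IsLowerBound S h) {f : E}
    (hf : 0 ≤ f) (hf1 : ‖f‖ = 1) : ‖h‖ ≤ 1 := by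
  have hbound (n : ℕ) : ‖h‖ ≤ 1 + ‖((S ^ n) f - h)⁻‖ := by
    have hSn := hS.pow n
    calc ‖h‖ ≤ ‖(S ^ n) f + ((S ^ n) f - h)⁻‖ :=
          norm_le_norm_of_nonneg_of_le hh.nonneg (le_add_negPart_sub _ _)
      _ = 1 + ‖((S ^ n) f - h)⁻‖ := by
          rw [hAL _ _ (hSn.nonneg f hf) (negPart_nonneg _), hSn.norm_eq f hf, hf1]
  simpa using ge_of_tendsto' ((hh.tendsto f hf hf1).const_add 1) hbound

theorem isSeqClosed_setOf : IsSeqClosed {h : E | IsLowerBound S h} := by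
  intro g h' hg hgh'
  refine ⟨isClosed_nonneg.mem_of_tendsto hgh' (Eventually.of_forall fun n => (hg n).nonneg),
    fun f hf hf1 => Metric.tendsto_atTop.2 fun ε hε => ?_⟩
  obtain ⟨k, hk⟩ := (hgh'.eventually (Metric.ball_mem_nhds h' (half_pos hε))).exists
  obtain ⟨N, hN⟩ := Metric.tendsto_atTop.1 ((hg k).tendsto f hf hf1) (ε / 2) (half_pos hε)
  refine ⟨N, fun n hn => ?_⟩
  have hLip : ‖((S ^ n) f - h')⁻‖ ≤ ‖((S ^ n) f - g k)⁻‖ + dist (g k) h' := by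
    have hnegPart := lipschitzWith_negPart.dist_le_mul ((S ^ n) f - h') ((S ^ n) f - g k)
    rw [NNReal.coe_one, one_mul, dist_sub_left, dist_eq_norm, dist_comm h'] at hnegPart
    linarith [norm_le_norm_add_norm_sub' ((S ^ n) f - h')⁻ ((S ^ n) f - g k)⁻]
  have hNn := hN n hn
  rw [Real.dist_eq, sub_zero, abs_of_nonneg (norm_nonneg _)] at hNn ⊢
  linarith [Metric.mem_ball.1 hk]

theorem exists_norm_pow_sub_le (hAL : IsALNorm E) (hS : IsMarkov S) (hh : IsLowerBound S h)
    (hh0 : h ≠ 0) {f g : E} (hf : 0 ≤ f) (hf1 : ‖f‖ = 1) (hg : 0 ≤ g) (hg1 : ‖g‖ = 1) :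
    ∃ m, ‖(S ^ m) f - (S ^ m) g‖ ≤ 2 - ‖h‖ := by
  have hε : 0 < ‖h‖ / 4 := by have := norm_pos_iff.2 hh0; positivity
  obtain ⟨m, hfm, hgm⟩ := (((hh.tendsto f hf hf1).eventually (gt_mem_nhds hε)).and
    ((hh.tendsto g hg hg1).eventually (gt_mem_nhds hε))).exists
  have hSm := hS.pow m
  have hnorm {x : E} (hx : 0 ≤ x) (hx1 : ‖x‖ = 1) :
      ‖(S ^ m) x - h‖ = 1 - ‖h‖ + 2 * ‖((S ^ m) x - h)⁻‖ := by
    rw [hAL.norm_sub_eq_of_nonneg (hSm.nonneg x hx) hh.nonneg, hSm.norm_eq x hx, hx1]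
  refine ⟨m, ?_⟩
  calc ‖(S ^ m) f - (S ^ m) g‖ ≤ ‖(S ^ m) f - h‖ + ‖(S ^ m) g - h‖ := by
        simpa only [norm_sub_rev h] using
          norm_sub_le_norm_sub_add_norm_sub ((S ^ m) f) h ((S ^ m) g)
    _ ≤ 2 - ‖h‖ := by rw [hnorm hf hf1, hnorm hg hg1]; linarith

theorem exists_norm_pow_apply_le (hAL : IsALNorm E) (hS : IsMarkov S) (hh : IsLowerBound S h)
    (hh0 : h ≠ 0) {v : E} (hv : hAL.normFunctional v = 0) :
    ∃ m, ‖(S ^ m) v‖ ≤ (1 - ‖h‖ / 2) * ‖v‖ := by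
  by_cases hv0 : v = 0
  · exact ⟨0, by simp [hv0]⟩
  have hnorm_eq : ‖v⁻‖ = ‖v⁺‖ := by rw [hAL.normFunctional_apply] at hv; linarith
  have hv2 : ‖v‖ = 2 * ‖v⁺‖ := by
    rw [hAL.norm_eq_norm_posPart_add_norm_negPart, hnorm_eq]; ring
  have hpos : v⁺ ≠ 0 := fun h0 => hv0 (norm_eq_zero.1 (by rw [hv2, h0, norm_zero, mul_zero]))
  have hneg : v⁻ ≠ 0 := norm_ne_zero_iff.1 (hnorm_eq ▸ norm_ne_zero_iff.2 hpos)
  obtain ⟨m, hm⟩ := hh.exists_norm_pow_sub_le hAL hS hh0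
    (inv_norm_smul_nonneg (posPart_nonneg v)) (norm_smul_inv_norm hpos)
    (inv_norm_smul_nonneg (negPart_nonneg v)) (norm_smul_inv_norm hneg)
  have hsplit : (S ^ m) v = ‖v⁺‖ • ((S ^ m) (‖v⁺‖⁻¹ • v⁺) - (S ^ m) (‖v⁻‖⁻¹ • v⁻)) := by
    rw [hnorm_eq, map_smul, map_smul, ← smul_sub, smul_inv_smul₀ (norm_ne_zero_iff.2 hpos),
      ← map_sub, posPart_sub_negPart]
  refine ⟨m, ?_⟩
  rw [hsplit, norm_smul, norm_norm, hv2]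
  nlinarith [norm_nonneg v⁺]

theorem tendsto_norm_pow_apply (hAL : IsALNorm E) (hS : IsMarkov S) (hh : IsLowerBound S h)
    (hh0 : h ≠ 0) {v : E} (hv : hAL.normFunctional v = 0) :
    Tendsto (fun n => ‖(S ^ n) v‖) atTop (𝓝 0) := by
  have hanti : Antitone fun n => ‖(S ^ n) v‖ := antitone_nat_of_succ_le fun n => by
    rw [pow_succ', mul_apply_eq_comp]
    exact hS.norm_apply_le hAL _
  obtain ⟨L, hL⟩ : ∃ L, Tendsto (fun n => ‖(S ^ n) v‖) atTop (𝓝 L) :=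
    ⟨_, tendsto_atTop_ciInf hanti ⟨0, Set.forall_mem_range.2 fun n => norm_nonneg _⟩⟩
  have hstep (N : ℕ) : L ≤ (1 - ‖h‖ / 2) * ‖(S ^ N) v‖ := by
    obtain ⟨m, hm⟩ := hh.exists_norm_pow_apply_le hAL hS hh0
      (by rwa [(hS.pow N).normFunctional_apply hAL])
    rw [← mul_apply_eq_comp, ← pow_add] at hm
    exact (hanti.le_of_tendsto hL _).trans hm
  have hLq : L ≤ (1 - ‖h‖ / 2) * L := ge_of_tendsto' (hL.const_mul _) hstep
  have hL0 : 0 ≤ L := ge_of_tendsto' hL fun n => norm_nonneg _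
  obtain rfl : L = 0 := by nlinarith [norm_pos_iff.2 hh0]
  exact hL

theorem exists_isFixedPt [CompleteSpace E] (hAL : IsALNorm E) (hS : IsMarkov S)
    (hh : IsLowerBound S h) (hh0 : h ≠ 0) : ∃ f₀, 0 ≤ f₀ ∧ ‖f₀‖ = 1 ∧ S f₀ = f₀ := by
  have hbdd : BddAbove (norm '' {h | IsLowerBound S h}) :=
    ⟨1, Set.forall_mem_image.2 fun _ hx =>
      hx.norm_le_one hAL hS (inv_norm_smul_nonneg hh.nonneg) (norm_smul_inv_norm hh0)⟩
  obtain ⟨h', hh', hmax⟩ := hAL.exists_forall_norm_le ⟨h, hh⟩ (fun _ hx => hx.nonneg)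
    (fun _ h₁ _ h₂ => h₁.sup h₂) isSeqClosed_setOf hbdd
  have hsup : h' = h' ⊔ S h' :=
    hAL.eq_of_le_of_norm_le hh'.nonneg le_sup_left (hmax _ (hh'.sup (hh'.map hS)))
  have hfix : S h' = h' := hAL.eq_of_le_of_norm_le (hS.nonneg _ hh'.nonneg)
    (le_sup_right.trans_eq hsup.symm) (hS.norm_eq _ hh'.nonneg).ge
  have hne : h' ≠ 0 := norm_ne_zero_iff.1 ((norm_pos_iff.2 hh0).trans_le (hmax h hh)).ne'
  exact ⟨‖h'‖⁻¹ • h', inv_norm_smul_nonneg hh'.nonneg, norm_smul_inv_norm hne,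
    by rw [map_smul, hfix]⟩

theorem exists_tendsto_pow [CompleteSpace E] (hAL : IsALNorm E) (hS : IsMarkov S)
    (hh : IsLowerBound S h) (hh0 : h ≠ 0) :
    ∃ f₀, 0 ≤ f₀ ∧ ‖f₀‖ = 1 ∧ S f₀ = f₀ ∧
      ∀ f, Tendsto (fun n : ℕ => (S ^ n) f) atTop (𝓝 (hAL.normFunctional f • f₀)) := by
  obtain ⟨f₀, hf₀, hf₀1, hfix⟩ := hh.exists_isFixedPt hAL hS hh0
  refine ⟨f₀, hf₀, hf₀1, hfix, fun f => tendsto_iff_norm_sub_tendsto_zero.2 ?_⟩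
  have hker : hAL.normFunctional (f - hAL.normFunctional f • f₀) = 0 := by
    rw [map_sub, map_smul, hAL.normFunctional_apply_of_nonneg hf₀, hf₀1, smul_eq_mul, mul_one,
      sub_self]
  refine (hh.tendsto_norm_pow_apply hAL hS hh0 hker).congr fun n => ?_
  rw [map_sub, map_smul, pow_apply_eq_iterate S n f₀, Function.IsFixedPt.iterate hfix n]

end IsLowerBound

theorem eq_of_isFixedPt_of_tendsto_pow (hAL : IsALNorm E) {S : E →L[ℝ] E} {f₀ g : E}
    (hconv : ∀ f, Tendsto (fun n : ℕ => (S ^ n) f) atTop (𝓝 (hAL.normFunctional f • f₀)))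
    (hg : 0 ≤ g) (hg1 : ‖g‖ = 1) (hfix : S g = g) : g = f₀ := by
  have hiter (n : ℕ) : (S ^ n) g = g := by
    rw [pow_apply_eq_iterate]
    exact Function.IsFixedPt.iterate hfix n
  have hconst := hconv g
  simp only [hiter, hAL.normFunctional_apply_of_nonneg hg, hg1, one_smul] at hconst
  exact tendsto_nhds_unique tendsto_const_nhds hconst

section Semigroup

variable {T : ℝ → E →L[ℝ] E}

theorem norm_semigroup_apply_le_of_le (hAL : IsALNorm E)
    (hT : ∀ s t, 0 < s → 0 < t → T (s + t) = (T s).comp (T t))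
    (hM : ∀ t, 0 < t → IsMarkov (T t)) {s t : ℝ} (hs : 0 < s) (hst : s ≤ t) (x : E) :
    ‖T t x‖ ≤ ‖T s x‖ := by
  rcases hst.eq_or_lt with rfl | hlt
  · rfl
  have hsplit := hT (t - s) s (sub_pos.2 hlt) hs
  rw [sub_add_cancel] at hsplit
  rw [hsplit, ContinuousLinearMap.comp_apply]
  exact (hM _ (sub_pos.2 hlt)).norm_apply_le hAL _

theorem exists_tendsto_semigroup [CompleteSpace E] (hAL : IsALNorm E)
    (hT : ∀ s t, 0 < s → 0 < t → T (s + t) = (T s).comp (T t))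
    (hM : ∀ t, 0 < t → IsMarkov (T t)) {h : E} (hh : 0 ≤ h) (hh0 : h ≠ 0)
    (hLB : ∀ f, 0 ≤ f → ‖f‖ = 1 → Tendsto (fun t : ℝ => ‖(T t f - h)⁻‖) atTop (𝓝 0)) :
    ∃ f₀, 0 ≤ f₀ ∧ ‖f₀‖ = 1 ∧ (∀ t, 0 < t → T t f₀ = f₀) ∧
      ∀ f, Tendsto (fun t => T t f) atTop (𝓝 (hAL.normFunctional f • f₀)) := by
  have hpow := semigroup_one_pow hT
  have hS : IsMarkov (T 1) := hM 1 one_pos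
  have hhS : IsLowerBound (T 1) h := ⟨hh, fun f hf hf1 =>
    ((hLB f hf hf1).comp tendsto_natCast_atTop_atTop).congr' <|
      (eventually_ge_atTop 1).mono fun n hn => by simp only [Function.comp_apply, hpow n hn]⟩
  obtain ⟨f₀, hf₀, hf₀1, hfix, hconv⟩ := hhS.exists_tendsto_pow hAL hS hh0
  have hTfix (t : ℝ) (ht : 0 < t) : T t f₀ = f₀ := by
    refine eq_of_isFixedPt_of_tendsto_pow hAL hconv ((hM t ht).nonneg f₀ hf₀)
      (((hM t ht).norm_eq f₀ hf₀).trans hf₀1) ?_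
    rw [← ContinuousLinearMap.comp_apply, ← hT 1 t one_pos ht, add_comm, hT t 1 ht one_pos,
      ContinuousLinearMap.comp_apply, hfix]
  refine ⟨f₀, hf₀, hf₀1, hTfix, fun f => tendsto_iff_norm_sub_tendsto_zero.2 ?_⟩
  have hdiff (t : ℝ) (ht : 0 < t) :
      T t f - hAL.normFunctional f • f₀ = T t (f - hAL.normFunctional f • f₀) := by
    rw [map_sub, map_smul, hTfix t ht]
  have hnat :=
    (tendsto_iff_norm_sub_tendsto_zero.1 (hconv f)).comp (tendsto_nat_floor_atTop (α := ℝ))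
  refine squeeze_zero' (Eventually.of_forall fun t => norm_nonneg _) ?_ hnat
  filter_upwards [eventually_ge_atTop 1] with t ht
  have hfloor : 1 ≤ ⌊t⌋₊ := (Nat.one_le_floor_iff t).2 ht
  have hfloor_pos : (0 : ℝ) < ⌊t⌋₊ := by exact_mod_cast hfloor
  rw [Function.comp_apply, hpow _ hfloor, hdiff t (by linarith), hdiff _ hfloor_pos]
  exact norm_semigroup_apply_le_of_le hAL hT hM hfloor_pos (Nat.floor_le (by linarith)) _

end Semigroup

theorem exists_lowerBound_of_tendsto_smul {ι : Type*} {l : Filter ι} {T : ι → E →L[ℝ] E}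
    {f₀ : E} {one : E →L[ℝ] ℝ} (hf₀ : 0 ≤ f₀) (hf₀1 : ‖f₀‖ = 1)
    (hone : ∀ f, 0 ≤ f → one f = ‖f‖) (hT : ∀ f, Tendsto (fun i => T i f) l (𝓝 (one f • f₀))) :
    ∃ h : E, 0 ≤ h ∧ h ≠ 0 ∧ ∀ f, 0 ≤ f → ‖f‖ = 1 → Tendsto (fun i => ‖(T i f - h)⁻‖) l (𝓝 0) :=
  ⟨f₀, hf₀, norm_ne_zero_iff.1 (hf₀1 ▸ one_ne_zero), fun f hf hf1 =>
    tendsto_norm_negPart_sub_of_tendsto (by simpa [hone f hf, hf1] using hT f)⟩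

end ALSpace

/-- The Lasota–Yorke theorem: a Markov semigroup on an AL-space converges strongly to a
rank-one projection `𝟙 ⊗ f₀` (with `𝟙` the norm functional and `f₀` a normalised positive
fixed vector) if and only if it admits a non-zero lower bound.  Both the time-discrete
case `J = ℕ` and the case `J = (0,∞)` are covered. -/
theorem lasota_yorke
    {E : Type*} [NormedAddCommGroup E] [Lattice E] [HasSolidNorm E] [IsOrderedAddMonoid E] [NormedSpace ℝ E] [CompleteSpace E]
    (hAL : ∀ f g : E, 0 ≤ f → 0 ≤ g → ‖f + g‖ = ‖f‖ + ‖g‖) :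
    -- the time-discrete case `J = ℕ`
    (∀ S : E →L[ℝ] E,
      (∀ f : E, 0 ≤ f → 0 ≤ S f) → (∀ f : E, 0 ≤ f → ‖S f‖ = ‖f‖) →
      ((∃ (f₀ : E) (one : E →L[ℝ] ℝ), 0 ≤ f₀ ∧ ‖f₀‖ = 1 ∧ S f₀ = f₀ ∧
          (∀ f : E, 0 ≤ f → one f = ‖f‖) ∧
          (∀ f : E, Tendsto (fun n : ℕ => (S ^ n) f) atTop (𝓝 (one f • f₀)))) ↔
        (∃ h : E, 0 ≤ h ∧ h ≠ 0 ∧ ∀ f : E, 0 ≤ f → ‖f‖ = 1 →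
          Tendsto (fun n : ℕ => ‖((S ^ n) f - h)⁻‖) atTop (𝓝 0)))) ∧
    -- the case `J = (0, ∞)`
    (∀ T : ℝ → E →L[ℝ] E,
      (∀ s t : ℝ, 0 < s → 0 < t → T (s + t) = (T s).comp (T t)) →
      (∀ t : ℝ, 0 < t → ∀ f : E, 0 ≤ f → 0 ≤ T t f) →
      (∀ t : ℝ, 0 < t → ∀ f : E, 0 ≤ f → ‖T t f‖ = ‖f‖) →
      ((∃ (f₀ : E) (one : E →L[ℝ] ℝ), 0 ≤ f₀ ∧ ‖f₀‖ = 1 ∧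
          (∀ t : ℝ, 0 < t → T t f₀ = f₀) ∧
          (∀ f : E, 0 ≤ f → one f = ‖f‖) ∧
          (∀ f : E, Tendsto (fun t : ℝ => T t f) atTop (𝓝 (one f • f₀)))) ↔
        (∃ h : E, 0 ≤ h ∧ h ≠ 0 ∧ ∀ f : E, 0 ≤ f → ‖f‖ = 1 →
          Tendsto (fun t : ℝ => ‖(T t f - h)⁻‖) atTop (𝓝 0)))) := by
  refine ⟨fun S hSpos hSnorm => ⟨?_, ?_⟩, fun T hT hTpos hTnorm => ⟨?_, ?_⟩⟩
  · rintro ⟨f₀, one, hf₀, hf₀1, -, hone, hconv⟩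
    exact exists_lowerBound_of_tendsto_smul (T := fun n : ℕ => S ^ n) hf₀ hf₀1 hone hconv
  · rintro ⟨h, hh, hh0, hLB⟩
    obtain ⟨f₀, hf₀, hf₀1, hfix, hconv⟩ :=
      IsLowerBound.exists_tendsto_pow hAL ⟨hSpos, hSnorm⟩ ⟨hh, hLB⟩ hh0
    exact ⟨f₀, IsALNorm.normFunctional hAL, hf₀, hf₀1, hfix,
      fun f hf => IsALNorm.normFunctional_apply_of_nonneg hAL hf, hconv⟩
  · rintro ⟨f₀, one, hf₀, hf₀1, -, hone, hconv⟩
    exact exists_lowerBound_of_tendsto_smul hf₀ hf₀1 hone hconv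
  · rintro ⟨h, hh, hh0, hLB⟩
    obtain ⟨f₀, hf₀, hf₀1, hfix, hconv⟩ :=
      exists_tendsto_semigroup hAL hT (fun t ht => ⟨hTpos t ht, hTnorm t ht⟩) hh hh0 hLB
    exact ⟨f₀, IsALNorm.normFunctional hAL, hf₀, hf₀1, hfix,
      fun f hf => IsALNorm.normFunctional_apply_of_nonneg hAL hf, hconv⟩
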